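/- Let 0 < β ≤ 1 and 0 < l, l̃ < ∞. Define ν(r) = exp(-α/(1-r^l)^β) and ν̃(r) = exp(-(l̃/l)^β · α/(1-r^{l̃})^β) for 0 ≤ r < 1, where α > 0. Then ν and ν̃ are comparable on [0,1): there exist constants c, C > 0 such that c ν̃(r) ≤ ν(r) ≤ C ν̃(r) for all 0 ≤ r < 1. -/

import Mathlib

lemma my_rpow_add_le (a b p : ℝ) (ha : 0 ≤ a) (hb : 0 ≤ b) (hp : 0 ≤ p) (hp1 : p ≤ 1) :
    (a + b) ^ p ≤ a ^ p + b ^ p := by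
  have h := NNReal.rpow_add_le_add_rpow a.toNNReal b.toNNReal hp hp1
  have h2 := NNReal.coe_le_coe.2 h
  push_cast at h2
  rwa [Real.coe_toNNReal a ha, Real.coe_toNNReal b hb] at h2

/-- Core estimate: for `x > 0`, `α / x^β ≤ α / (1 - e^{-x})^β ≤ α / x^β + α`. -/
lemma my_aux (β α x : ℝ) (hβ0 : 0 < β) (hβ1 : β ≤ 1) (hα : 0 < α) (hx : 0 < x) :
    α / x ^ β ≤ α / (1 - Real.exp (-x)) ^ β ∧
      α / (1 - Real.exp (-x)) ^ β ≤ α / x ^ β + α := by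
  have h1 : 1 - Real.exp (-x) ≤ x := by nlinarith [Real.add_one_le_exp (-x)]
  have h2 : 0 < 1 - Real.exp (-x) := by
    have : Real.exp (-x) < 1 := Real.exp_lt_one_iff.2 (by linarith)
    linarith
  have hxpos : (0:ℝ) < x ^ β := Real.rpow_pos_of_pos hx β
  have hepos : (0:ℝ) < (1 - Real.exp (-x)) ^ β := Real.rpow_pos_of_pos h2 β
  have h3 : x / (1 + x) ≤ 1 - Real.exp (-x) := by
    have he : 1 + x ≤ Real.exp x := by linarith [Real.add_one_le_exp x]
    have h1x : (0:ℝ) < 1 + x := by linarith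
    have hinv : Real.exp (-x) ≤ (1 + x)⁻¹ := by
      rw [Real.exp_neg]
      exact inv_anti₀ h1x he
    have : 1 - (1 + x)⁻¹ = x / (1 + x) := by field_simp; ring
    linarith [this ▸ (by linarith : 1 - (1 + x)⁻¹ ≤ 1 - Real.exp (-x))]
  constructor
  · apply div_le_div_of_nonneg_left hα.le hepos
    exact Real.rpow_le_rpow h2.le h1 hβ0.le
  · -- (x/(1+x))^β ≤ (1-e^{-x})^β, so α/(1-e)^β ≤ α (1+x)^β / x^β ≤ α/x^β + α
    have h1x : (0:ℝ) < 1 + x := by linarith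
    have hq : (x / (1 + x)) ^ β ≤ (1 - Real.exp (-x)) ^ β :=
      Real.rpow_le_rpow (by positivity) h3 hβ0.le
    have hsplit : (x / (1 + x)) ^ β = x ^ β / (1 + x) ^ β :=
      Real.div_rpow hx.le h1x.le β
    have hb : (1 + x) ^ β ≤ 1 + x ^ β := by
      have := my_rpow_add_le 1 x β (by norm_num) hx.le hβ0.le hβ1
      simpa using this
    have hqpos : (0:ℝ) < x ^ β / (1 + x) ^ β := by positivity
    have step1 : α / (1 - Real.exp (-x)) ^ β ≤ α / (x ^ β / (1 + x) ^ β) := by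
      apply div_le_div_of_nonneg_left hα.le hqpos
      rw [← hsplit]; exact hq
    have step2 : α / (x ^ β / (1 + x) ^ β) = α * (1 + x) ^ β / x ^ β := by
      field_simp
    have step3 : α * (1 + x) ^ β / x ^ β ≤ α * (1 + x ^ β) / x ^ β := by
      gcongr
    have step4 : α * (1 + x ^ β) / x ^ β = α / x ^ β + α := by
      field_simp
    linarith [step2 ▸ step1, step4 ▸ step3]

/-- Bounds for `α / (1 - r^l)^β` in terms of `t = -log r`. -/
lemma my_aux2 (β α l r : ℝ) (hβ0 : 0 < β) (hβ1 : β ≤ 1) (hα : 0 < α) (hl : 0 < l)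
    (hr0 : 0 < r) (hr1 : r < 1) :
    α / (l * (-Real.log r)) ^ β ≤ α / (1 - r ^ l) ^ β ∧
      α / (1 - r ^ l) ^ β ≤ α / (l * (-Real.log r)) ^ β + α := by
  have ht : 0 < -Real.log r := by
    have := Real.log_neg hr0 hr1; linarith
  have hrl : r ^ l = Real.exp (-(l * (-Real.log r))) := by
    rw [Real.rpow_def_of_pos hr0]; ring_nf
  rw [hrl]
  exact my_aux β α _ hβ0 hβ1 hα (by positivity)

theorem stmt9 (β l lt α : ℝ) (hβ0 : 0 < β) (hβ1 : β ≤ 1)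
    (hl : 0 < l) (hlt : 0 < lt) (hα : 0 < α)
    (ν νt : ℝ → ℝ)
    (hν : ∀ r ∈ Set.Ico (0:ℝ) 1, ν r = Real.exp (-(α / (1 - r ^ l) ^ β)))
    (hνt : ∀ r ∈ Set.Ico (0:ℝ) 1,
      νt r = Real.exp (-((lt / l) ^ β * α / (1 - r ^ lt) ^ β))) :
    ∃ c C : ℝ, 0 < c ∧ 0 < C ∧ ∀ r ∈ Set.Ico (0:ℝ) 1,
      c * νt r ≤ ν r ∧ ν r ≤ C * νt r := by
  have hk : (0:ℝ) < (lt / l) ^ β := Real.rpow_pos_of_pos (by positivity) β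
  refine ⟨Real.exp (-α), Real.exp ((lt / l) ^ β * α), Real.exp_pos _, Real.exp_pos _, ?_⟩
  intro r hr
  obtain ⟨hr0, hr1⟩ := hr
  rw [hν r ⟨hr0, hr1⟩, hνt r ⟨hr0, hr1⟩]
  set A := α / (1 - r ^ l) ^ β with hA
  set B := (lt / l) ^ β * α / (1 - r ^ lt) ^ β with hB
  have hbounds : A ≤ B + α ∧ B ≤ A + (lt / l) ^ β * α := by
    rcases eq_or_lt_of_le hr0 with h0 | h0
    · -- r = 0
      have hrl : r ^ l = 0 := by rw [← h0]; exact Real.zero_rpow hl.ne'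
      have hrlt : r ^ lt = 0 := by rw [← h0]; exact Real.zero_rpow hlt.ne'
      have hAe : A = α := by rw [hA, hrl]; simp
      have hBe : B = (lt / l) ^ β * α := by rw [hB, hrlt]; simp
      constructor <;> nlinarith
    · -- 0 < r < 1
      set T := -Real.log r with hT
      have hTpos : 0 < T := by
        have := Real.log_neg h0 hr1; simp only [hT]; linarith
      obtain ⟨hA1, hA2⟩ := my_aux2 β α l r hβ0 hβ1 hα hl h0 hr1
      obtain ⟨hB1, hB2⟩ := my_aux2 β α lt r hβ0 hβ1 hα hlt h0 hr1
      -- key identity: (lt/l)^β * (α / (lt*T)^β) = α / (l*T)^β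
      have hid : (lt / l) ^ β * (α / (lt * T) ^ β) = α / (l * T) ^ β := by
        have h1 : (lt / l) ^ β * (l * T) ^ β = (lt * T) ^ β := by
          rw [← Real.mul_rpow (by positivity) (by positivity)]
          congr 1; field_simp
        have hp1 : (0:ℝ) < (l * T) ^ β := Real.rpow_pos_of_pos (by positivity) β
        have hp2 : (0:ℝ) < (lt * T) ^ β := Real.rpow_pos_of_pos (by positivity) β
        field_simp
        nlinarith
      -- B bounds
      have hBlow : α / (l * T) ^ β ≤ B := by
        rw [hB, mul_div_assoc, ← hid]
        exact mul_le_mul_of_nonneg_left hB1 hk.le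
      have hBhigh : B ≤ α / (l * T) ^ β + (lt / l) ^ β * α := by
        rw [hB, mul_div_assoc, ← hid, ← mul_add]
        exact mul_le_mul_of_nonneg_left hB2 hk.le
      constructor <;> [linarith; linarith]
  rw [← Real.exp_add, ← Real.exp_add]
  exact ⟨Real.exp_le_exp.2 (by linarith [hbounds.1]),
    Real.exp_le_exp.2 (by linarith [hbounds.2])⟩
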